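/- Let λ and ν be cardinals with λ infinite and ν > 2, and set κ := ⨆_{λ₀ < λ} (ν ^ λ₀)⁺, the supremum over all cardinals λ₀ < λ of the cardinal successor of ν ^ λ₀. Then for all cardinals λ₀ < λ and κ₀ < κ, one has κ₀ ^ λ₀ < κ. -/
import Mathlib


/- STATEMENT 16: For cardinals λ and ν with λ infinite and ν > 2, setting
κ := ⨆_{λ₀ < λ} (ν ^ λ₀)⁺, one has κ₀ ^ λ₀ < κ for all λ₀ < λ and κ₀ < κ. -/

universe u

theorem sup_succ_pow_closed_under_pow
    (lam ν : Cardinal.{u}) (hlam : Cardinal.aleph0 ≤ lam) (hν : 2 < ν)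
    (κ : Cardinal.{u})
    (hκ : κ = ⨆ lam₀ : Set.Iio lam, Order.succ (ν ^ (lam₀ : Cardinal.{u}))) :
    ∀ lam₀ < lam, ∀ κ₀ < κ, κ₀ ^ lam₀ < κ := by
  intro lam₀ hlam₀ κ₀ hκ₀
  subst hκ
  haveI : Nonempty (Set.Iio lam) := ⟨⟨0, lt_of_lt_of_le Cardinal.aleph0_pos hlam⟩⟩
  obtain ⟨⟨lam₁, hlam₁⟩, h1⟩ := exists_lt_of_lt_ciSup hκ₀
  have hκ₀le : κ₀ ≤ ν ^ lam₁ := Order.lt_succ_iff.mp h1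
  have hprod : lam₁ * lam₀ < lam :=
    Cardinal.mul_lt_of_lt hlam hlam₁ hlam₀
  have key : κ₀ ^ lam₀ ≤ ν ^ (lam₁ * lam₀) := by
    rw [Cardinal.power_mul]
    exact Cardinal.power_le_power_right hκ₀le
  have hle : Order.succ (ν ^ (lam₁ * lam₀)) ≤
      ⨆ lam₂ : Set.Iio lam, Order.succ (ν ^ (lam₂ : Cardinal.{u})) :=
    le_ciSup (Cardinal.bddAbove_range _) (⟨lam₁ * lam₀, hprod⟩ : Set.Iio lam)
  exact lt_of_le_of_lt key (lt_of_lt_of_le (Order.lt_succ _) hle)
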